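/- Let X be a finite alphabet and c₀ a pseudo-metric on X ∪ {−}. Then for all trees x̄, ȳ over X, the pseudo edit distance evaluated at the default cost function equals the true tree edit distance: d̃_{c₀}(x̄, ȳ) = d_{c₀}(x̄, ȳ), where the edit script matrix P_{c₀}(x̄, ȳ) encodes a cheapest edit script under c₀. -/

import Mathlib

/-!
Tai's argument: the edit distance is the cost of a cheapest tree mapping. A tree mapping is
realised by an edit script of the same cost: delete the unmatched nodes of `x̄`, insert the
unmatched nodes of `ȳ`; what remains are two trees of the same shape, related by relabelling.
Conversely, reading an edit script backwards, each edit turns a mapping for the rest of the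
script into one for the whole script, at extra cost at most the cost of the edit (the triangle
inequality for `c₀` pays for composing an insertion or relabelling with a later match). So an
optimal mapping costs at most every script, and at least the distance.
-/

/-- A rooted ordered tree with labels from `X`. -/
inductive PTree (X : Type) : Type where
  | node : X → List (PTree X) → PTree X

namespace PTree

variable {X : Type}

mutual
  /-- The labels of a tree in pre-order. -/
  def preorder : PTree X → List X
    | .node l cs => l :: preorderF cs
  /-- The labels of a forest in pre-order. -/
  def preorderF : List (PTree X) → List X
    | [] => []
    | t :: ts => preorder t ++ preorderF ts
end

/-- The size of a tree (number of nodes). -/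
def size (t : PTree X) : ℕ := (preorder t).length

/-- `Deletes f g l` holds iff the forest `g` is obtained from the forest `f` by
deleting one node labeled `l`, attaching its children in its place. -/
inductive Deletes : List (PTree X) → List (PTree X) → X → Prop where
  | here (l : X) (cs rest : List (PTree X)) :
      Deletes (.node l cs :: rest) (cs ++ rest) l
  | child {cs cs' : List (PTree X)} {l : X} (z : X) (rest : List (PTree X)) :
      Deletes cs cs' l → Deletes (.node z cs :: rest) (.node z cs' :: rest) l
  | skip {rest rest' : List (PTree X)} {l : X} (t : PTree X) :
      Deletes rest rest' l → Deletes (t :: rest) (t :: rest') l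

/-- `Replaces f g l l'` holds iff the forest `g` is obtained from the forest `f` by
changing the label `l` of one node into `l'`. -/
inductive Replaces : List (PTree X) → List (PTree X) → X → X → Prop where
  | here (l l' : X) (cs rest : List (PTree X)) :
      Replaces (.node l cs :: rest) (.node l' cs :: rest) l l'
  | child {cs cs' : List (PTree X)} {l l' : X} (z : X) (rest : List (PTree X)) :
      Replaces cs cs' l l' → Replaces (.node z cs :: rest) (.node z cs' :: rest) l l'
  | skip {rest rest' : List (PTree X)} {l l' : X} (t : PTree X) :
      Replaces rest rest' l l' → Replaces (t :: rest) (t :: rest') l l'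

/-- `EditStep c f g r` holds iff one tree edit (a deletion, an insertion, or a
replacement) of cost `r` under the cost function `c` transforms the forest `f`
into the forest `g`. The gap symbol `−` is represented by `none`:
deleting label `l` costs `c (some l) none`, inserting label `l` costs
`c none (some l)`, and replacing label `l` by `l'` costs `c (some l) (some l')`.
An insertion is exactly the inverse of a deletion (the inserted node may adopt
a consecutive run of existing siblings as children). -/
inductive EditStep (c : Option X → Option X → ℝ) :
    List (PTree X) → List (PTree X) → ℝ → Prop where
  | del {f g : List (PTree X)} {l : X} :
      Deletes f g l → EditStep c f g (c (some l) none)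
  | ins {f g : List (PTree X)} {l : X} :
      Deletes g f l → EditStep c f g (c none (some l))
  | rep {f g : List (PTree X)} {l l' : X} :
      Replaces f g l l' → EditStep c f g (c (some l) (some l'))

/-- `Script c f g r` holds iff some edit script (finite sequence of edits) of
total cost `r` under the cost function `c` transforms the forest `f` into the
forest `g`. -/
inductive Script (c : Option X → Option X → ℝ) :
    List (PTree X) → List (PTree X) → ℝ → Prop where
  | nil (f : List (PTree X)) : Script c f f 0
  | cons {f g h : List (PTree X)} {r s : ℝ} :
      EditStep c f g r → Script c g h s → Script c f h (r + s)

/-- The tree edit distance `d_c`: the infimum of the costs of all edit scripts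
transforming the tree `x` into the tree `y`. -/
noncomputable def editDist (c : Option X → Option X → ℝ) (x y : PTree X) : ℝ :=
  sInf {r : ℝ | Script c [x] [y] r}

mutual
  /-- In pre-order: for every node of the tree, the size of the subtree rooted
  at that node. -/
  def subtreeSizes : PTree X → List ℕ
    | .node l cs => size (.node l cs) :: subtreeSizesF cs
  /-- In pre-order: for every node of the forest, the size of the subtree rooted
  at that node. -/
  def subtreeSizesF : List (PTree X) → List ℕ
    | [] => []
    | t :: ts => subtreeSizes t ++ subtreeSizesF ts
end

/-- The label of the `i`-th node of `t` in pre-order (`0`-based). -/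
def label (t : PTree X) (i : Fin (size t)) : X := (preorder t).get i

/-- The `i`-th node of `t` (in `0`-based pre-order) is an ancestor of the
`j`-th node, characterized via pre-order indices and subtree sizes. -/
def IsAncestor (t : PTree X) (i j : ℕ) : Prop :=
  i < j ∧ j < i + (subtreeSizes t).getD i 0

/-- A tree mapping between `x` and `y`: a set of pairs of (`0`-based pre-order)
node indices such that every index occurs in at most one pair, the mapping is
order-preserving, and it is ancestor-preserving. -/
def IsTreeMapping (x y : PTree X) (M : Finset (Fin (size x) × Fin (size y))) : Prop :=
  ∀ p ∈ M, ∀ q ∈ M,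
    (p.1 = q.1 ↔ p.2 = q.2) ∧ (p.1 < q.1 ↔ p.2 < q.2) ∧
    (IsAncestor x ↑p.1 ↑q.1 ↔ IsAncestor y ↑p.2 ↑q.2)

/-- The cost of a tree mapping `M` under the cost function `c`: matched pairs
of nodes pay the replacement cost, unmatched nodes of `x` pay the deletion
cost, unmatched nodes of `y` pay the insertion cost. -/
def mappingCost (c : Option X → Option X → ℝ) (x y : PTree X)
    (M : Finset (Fin (size x) × Fin (size y))) : ℝ :=
  (∑ p ∈ M, c (some (label x p.1)) (some (label y p.2)))
    + (∑ i ∈ Finset.univ.filter (fun i : Fin (size x) => ∀ p ∈ M, p.1 ≠ i),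
        c (some (label x i)) none)
    + (∑ j ∈ Finset.univ.filter (fun j : Fin (size y) => ∀ p ∈ M, p.2 ≠ j),
        c none (some (label y j)))

/-- The mapping distance `D_c` (the quantity computed by the dynamic
programming scheme of Zhang and Shasha): the minimal cost of a tree mapping
between `x` and `y`. -/
noncomputable def mapDist (c : Option X → Option X → ℝ) (x y : PTree X) : ℝ :=
  sInf {r : ℝ | ∃ M, IsTreeMapping x y M ∧ mappingCost c x y M = r}

end PTree

/-- A pseudo-metric on a type `S`: non-negative, symmetric, zero on the
diagonal, and satisfying the triangle inequality. -/
def IsPseudoMetric {S : Type} (c : S → S → ℝ) : Prop :=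
  (∀ a b, 0 ≤ c a b) ∧ (∀ a b, c a b = c b a) ∧ (∀ a, c a a = 0) ∧
    (∀ a b d, c a d ≤ c a b + c b d)

namespace PTree

open Finset

variable {X : Type}

def sizeF (f : List (PTree X)) : ℕ := (preorderF f).length

@[simp] lemma preorder_node (l : X) (cs : List (PTree X)) :
    preorder (.node l cs) = l :: preorderF cs := rfl

@[simp] lemma preorderF_nil : preorderF ([] : List (PTree X)) = [] := rfl

@[simp] lemma preorderF_cons (t : PTree X) (ts : List (PTree X)) :
    preorderF (t :: ts) = preorder t ++ preorderF ts := rfl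

@[simp] lemma subtreeSizes_node (l : X) (cs : List (PTree X)) :
    subtreeSizes (.node l cs) = size (.node l cs) :: subtreeSizesF cs := rfl

@[simp] lemma subtreeSizesF_nil : subtreeSizesF ([] : List (PTree X)) = [] := rfl

@[simp] lemma subtreeSizesF_cons (t : PTree X) (ts : List (PTree X)) :
    subtreeSizesF (t :: ts) = subtreeSizes t ++ subtreeSizesF ts := rfl

lemma preorderF_append (f g : List (PTree X)) :
    preorderF (f ++ g) = preorderF f ++ preorderF g := by
  induction f with
  | nil => rfl
  | cons t ts ih => simp [ih]

lemma subtreeSizesF_append (f g : List (PTree X)) :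
    subtreeSizesF (f ++ g) = subtreeSizesF f ++ subtreeSizesF g := by
  induction f with
  | nil => rfl
  | cons t ts ih => simp [ih]

@[simp] lemma sizeF_nil : sizeF ([] : List (PTree X)) = 0 := rfl

@[simp] lemma sizeF_cons (t : PTree X) (ts : List (PTree X)) :
    sizeF (t :: ts) = size t + sizeF ts := by
  simp [sizeF, size]

@[simp] lemma size_node (l : X) (cs : List (PTree X)) :
    size (.node l cs) = sizeF cs + 1 := by
  simp [size, sizeF]

lemma size_pos (t : PTree X) : 0 < size t := by
  cases t; simp

@[simp] lemma sizeF_singleton (t : PTree X) : sizeF [t] = size t := by simp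

@[simp] lemma subtreeSizesF_singleton (t : PTree X) :
    subtreeSizesF [t] = subtreeSizes t := by simp

mutual
theorem length_subtreeSizes (t : PTree X) : (subtreeSizes t).length = size t := by
  cases t with
  | node l cs => simp [length_subtreeSizesF cs]
theorem length_subtreeSizesF (f : List (PTree X)) : (subtreeSizesF f).length = sizeF f := by
  cases f with
  | nil => rfl
  | cons t ts => simp [length_subtreeSizes t, length_subtreeSizesF ts]
end

lemma getD_subtreeSizesF_cons (t : PTree X) (ts : List (PTree X)) (i : ℕ) :
    (subtreeSizesF (t :: ts)).getD i 0 = if i < size t then (subtreeSizes t).getD i 0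
      else (subtreeSizesF ts).getD (i - size t) 0 := by
  split_ifs with h
  · rw [subtreeSizesF_cons, List.getD_append _ _ _ _ (by rwa [length_subtreeSizes])]
  · rw [subtreeSizesF_cons, List.getD_append_right _ _ _ _ (by rw [length_subtreeSizes]; omega),
      length_subtreeSizes]

mutual
theorem add_getD_subtreeSizes_le (t : PTree X) :
    ∀ i < size t, i + (subtreeSizes t).getD i 0 ≤ size t := by
  cases t with
  | node l cs =>
    rintro (_ | i) hi
    · simp
    · have := add_getD_subtreeSizesF_le cs i (by simpa using hi)
      simp only [subtreeSizes_node, List.getD_cons_succ, size_node]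
      omega
theorem add_getD_subtreeSizesF_le (f : List (PTree X)) :
    ∀ i < sizeF f, i + (subtreeSizesF f).getD i 0 ≤ sizeF f := by
  cases f with
  | nil => simp
  | cons t ts =>
    intro i hi
    rw [getD_subtreeSizesF_cons, sizeF_cons]
    split_ifs with h
    · have := add_getD_subtreeSizes_le t i h
      omega
    · have := add_getD_subtreeSizesF_le ts (i - size t) (by simp at hi; omega)
      omega
end

mutual
theorem getD_subtreeSizes_pos (t : PTree X) : ∀ i < size t, 0 < (subtreeSizes t).getD i 0 := by
  cases t with
  | node l cs =>
    rintro (_ | i) hi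
    · simp
    · simpa using getD_subtreeSizesF_pos cs i (by simpa using hi)
theorem getD_subtreeSizesF_pos (f : List (PTree X)) :
    ∀ i < sizeF f, 0 < (subtreeSizesF f).getD i 0 := by
  cases f with
  | nil => simp
  | cons t ts =>
    intro i hi
    rw [getD_subtreeSizesF_cons]
    split_ifs with h
    · exact getD_subtreeSizes_pos t i h
    · exact getD_subtreeSizesF_pos ts (i - size t) (by simp at hi; omega)
end

def IsAncestorF (f : List (PTree X)) (i j : ℕ) : Prop :=
  i < j ∧ j < i + (subtreeSizesF f).getD i 0

lemma isAncestorF_singleton (t : PTree X) (i j : ℕ) :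
    IsAncestorF [t] i j ↔ IsAncestor t i j := by
  rw [IsAncestorF, IsAncestor, subtreeSizesF_singleton]

/-- The subtree-size list that results from erasing node `k` of a forest whose subtree-size
list is `L`: entry `k` disappears and each ancestor of `k` shrinks by one. -/
def sizesErase : ℕ → List ℕ → List ℕ
  | _, [] => []
  | 0, _ :: L => L
  | k + 1, s :: L => (if k + 1 < s then s - 1 else s) :: sizesErase k L

@[simp] lemma sizesErase_nil (k : ℕ) : sizesErase k [] = [] := by cases k <;> rfl

@[simp] lemma sizesErase_zero_cons (s : ℕ) (L : List ℕ) : sizesErase 0 (s :: L) = L := rfl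

@[simp] lemma sizesErase_succ_cons (k s : ℕ) (L : List ℕ) :
    sizesErase (k + 1) (s :: L) = (if k + 1 < s then s - 1 else s) :: sizesErase k L := rfl

lemma sizesErase_append_of_lt {k : ℕ} {A : List ℕ} (h : k < A.length) (B : List ℕ) :
    sizesErase k (A ++ B) = sizesErase k A ++ B := by
  induction A generalizing k with
  | nil => simp at h
  | cons s A ih =>
    cases k with
    | zero => simp
    | succ k => simp [ih (by simpa using h)]

lemma sizesErase_length_add_append {A : List ℕ}
    (hA : ∀ i < A.length, i + A.getD i 0 ≤ A.length) (k : ℕ) (B : List ℕ) :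
    sizesErase (A.length + k) (A ++ B) = A ++ sizesErase k B := by
  induction A with
  | nil => simp
  | cons s A ih =>
    have h0 : s ≤ A.length + 1 := by simpa using hA 0 (by simp)
    have hA' : ∀ i < A.length, i + A.getD i 0 ≤ A.length := fun i hi => by
      have := hA (i + 1) (by simpa using hi)
      simp only [List.getD_cons_succ, List.length_cons] at this
      omega
    rw [List.cons_append, List.length_cons, show A.length + 1 + k = A.length + k + 1 by omega,
      sizesErase_succ_cons, if_neg (by omega), ih hA', List.cons_append]

lemma getD_sizesErase_of_lt {k m : ℕ} (L : List ℕ) (h : m < k) :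
    (sizesErase k L).getD m 0 =
      if k < m + L.getD m 0 then L.getD m 0 - 1 else L.getD m 0 := by
  induction L generalizing k m with
  | nil => simp
  | cons s L ih =>
    obtain ⟨k, rfl⟩ : ∃ k', k = k' + 1 := ⟨k - 1, by omega⟩
    cases m with
    | zero => simp
    | succ m =>
      rw [sizesErase_succ_cons, List.getD_cons_succ, List.getD_cons_succ, ih (by omega)]
      split_ifs <;> omega

lemma getD_sizesErase_of_le {k m : ℕ} (L : List ℕ) (h : k ≤ m) :
    (sizesErase k L).getD m 0 = L.getD (m + 1) 0 := by
  induction L generalizing k m with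
  | nil => simp
  | cons s L ih =>
    cases k with
    | zero => simp
    | succ k =>
      obtain ⟨m, rfl⟩ : ∃ m', m = m' + 1 := ⟨m - 1, by omega⟩
      simpa using ih (by omega)

structure IsDeletionAt (f g : List (PTree X)) (l : X) (k : ℕ) : Prop where
  lt_sizeF : k < sizeF f
  getElem?_eq : (preorderF f)[k]? = some l
  preorderF_eq : preorderF g = (preorderF f).eraseIdx k
  subtreeSizesF_eq : subtreeSizesF g = sizesErase k (subtreeSizesF f)

lemma isDeletionAt_here (l : X) (cs rest : List (PTree X)) :
    IsDeletionAt (.node l cs :: rest) (cs ++ rest) l 0 :=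
  ⟨by simp, by simp, by simp [preorderF_append], by simp [subtreeSizesF_append]⟩

lemma IsDeletionAt.sizeF_eq {f g : List (PTree X)} {l : X} {k : ℕ}
    (h : IsDeletionAt f g l k) : sizeF g = sizeF f - 1 := by
  rw [sizeF, h.preorderF_eq, List.length_eraseIdx_of_lt h.lt_sizeF, sizeF]

lemma IsDeletionAt.child {cs cs' : List (PTree X)} {l : X} {k : ℕ} (z : X)
    (rest : List (PTree X)) (h : IsDeletionAt cs cs' l k) :
    IsDeletionAt (.node z cs :: rest) (.node z cs' :: rest) l (k + 1) := by
  have hk : k < sizeF cs := h.lt_sizeF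
  have hsize := h.sizeF_eq
  refine ⟨by simp; omega, ?_, ?_, ?_⟩
  · simp [List.getElem?_append_left (show k < (preorderF cs).length from hk), h.getElem?_eq]
  · simp [List.eraseIdx_append_of_lt_length (show k < (preorderF cs).length from hk),
      h.preorderF_eq]
  · simp only [subtreeSizesF_cons, subtreeSizes_node, List.cons_append, sizesErase_succ_cons]
    rw [sizesErase_append_of_lt (by rwa [length_subtreeSizesF]), h.subtreeSizesF_eq,
      if_pos (by simp; omega)]
    simp only [size_node, hsize]
    congr 2
    omega

lemma IsDeletionAt.skip {rest rest' : List (PTree X)} {l : X} {k : ℕ} (t : PTree X)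
    (h : IsDeletionAt rest rest' l k) :
    IsDeletionAt (t :: rest) (t :: rest') l (size t + k) := by
  have hk := h.lt_sizeF
  have ht : (preorder t).length = size t := rfl
  refine ⟨by simp; omega, ?_, ?_, ?_⟩
  · rw [preorderF_cons, List.getElem?_append_right (by omega), ht, Nat.add_sub_cancel_left,
      h.getElem?_eq]
  · rw [preorderF_cons, preorderF_cons, List.eraseIdx_append_of_length_le (by omega), ht,
      Nat.add_sub_cancel_left, h.preorderF_eq]
  · rw [subtreeSizesF_cons, subtreeSizesF_cons, ← length_subtreeSizes,
      sizesErase_length_add_append, h.subtreeSizesF_eq]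
    intro i hi
    rw [length_subtreeSizes] at hi ⊢
    exact add_getD_subtreeSizes_le t i hi

theorem Deletes.exists_isDeletionAt {f g : List (PTree X)} {l : X} (h : Deletes f g l) :
    ∃ k, IsDeletionAt f g l k := by
  induction h with
  | here l cs rest => exact ⟨0, isDeletionAt_here l cs rest⟩
  | child z rest _ ih => obtain ⟨k, hk⟩ := ih; exact ⟨k + 1, hk.child z rest⟩
  | skip t _ ih => obtain ⟨k, hk⟩ := ih; exact ⟨size t + k, hk.skip t⟩

mutual
theorem exists_deletes_cons_isDeletionAt (t : PTree X) (rest : List (PTree X)) :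
    ∀ k < size t, ∃ g l, Deletes (t :: rest) g l ∧ IsDeletionAt (t :: rest) g l k := by
  cases t with
  | node z cs =>
    rintro (_ | k) hk
    · exact ⟨cs ++ rest, z, .here z cs rest, isDeletionAt_here z cs rest⟩
    · obtain ⟨g, l, hd, hg⟩ := exists_deletes_isDeletionAt cs k (by simpa using hk)
      exact ⟨_, l, hd.child z rest, hg.child z rest⟩
theorem exists_deletes_isDeletionAt (f : List (PTree X)) :
    ∀ k < sizeF f, ∃ g l, Deletes f g l ∧ IsDeletionAt f g l k := by
  cases f with
  | nil => simp
  | cons t ts =>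
    intro k hk
    by_cases h : k < size t
    · exact exists_deletes_cons_isDeletionAt t ts k h
    · obtain ⟨g, l, hd, hg⟩ := exists_deletes_isDeletionAt ts (k - size t) (by simp at hk; omega)
      refine ⟨t :: g, l, hd.skip t, ?_⟩
      simpa [show size t + (k - size t) = k by omega] using hg.skip t
end

structure IsReplacementAt (f g : List (PTree X)) (l l' : X) (k : ℕ) : Prop where
  lt_sizeF : k < sizeF f
  getElem?_eq : (preorderF f)[k]? = some l
  preorderF_eq : preorderF g = (preorderF f).set k l'
  subtreeSizesF_eq : subtreeSizesF g = subtreeSizesF f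

lemma IsReplacementAt.sizeF_eq {f g : List (PTree X)} {l l' : X} {k : ℕ}
    (h : IsReplacementAt f g l l' k) : sizeF g = sizeF f := by
  rw [sizeF, h.preorderF_eq, List.length_set, sizeF]

theorem Replaces.exists_isReplacementAt {f g : List (PTree X)} {l l' : X}
    (h : Replaces f g l l') : ∃ k, IsReplacementAt f g l l' k := by
  induction h with
  | here l l' cs rest => exact ⟨0, by simp, by simp, by simp, by simp⟩
  | @child cs cs' l l' z rest _ ih =>
    obtain ⟨k, hk⟩ := ih
    have hlt : k < (preorderF cs).length := hk.lt_sizeF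
    refine ⟨k + 1, by simp; have := hk.lt_sizeF; omega, ?_, ?_, ?_⟩
    · simp [List.getElem?_append_left hlt, hk.getElem?_eq]
    · simp [hlt, hk.preorderF_eq]
    · simp [hk.subtreeSizesF_eq, hk.sizeF_eq]
  | skip t _ ih =>
    obtain ⟨k, hk⟩ := ih
    have hlt := hk.lt_sizeF
    have ht : (preorder t).length = size t := rfl
    refine ⟨size t + k, by simp; omega, ?_, ?_, by simp [hk.subtreeSizesF_eq]⟩
    · rw [preorderF_cons, List.getElem?_append_right (by omega), ht, Nat.add_sub_cancel_left,
        hk.getElem?_eq]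
    · rw [preorderF_cons, preorderF_cons, List.set_append, if_neg (by omega), ht,
        Nat.add_sub_cancel_left, hk.preorderF_eq]

section Scripts

variable {c : Option X → Option X → ℝ}

theorem Script.trans {f g h : List (PTree X)} {r s : ℝ}
    (h₁ : Script c f g r) (h₂ : Script c g h s) : Script c f h (r + s) := by
  induction h₁ with
  | nil => simpa using h₂
  | cons e _ ih => simpa [add_assoc] using Script.cons e (ih h₂)

theorem Script.single {f g : List (PTree X)} {r : ℝ} (e : EditStep c f g r) :
    Script c f g r := by
  simpa using Script.cons e (Script.nil g)

theorem EditStep.child {f g : List (PTree X)} {r : ℝ} (z : X) (rest : List (PTree X))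
    (e : EditStep c f g r) : EditStep c (.node z f :: rest) (.node z g :: rest) r := by
  cases e with
  | del h => exact .del (h.child z rest)
  | ins h => exact .ins (h.child z rest)
  | rep h => exact .rep (h.child z rest)

theorem EditStep.skip {f g : List (PTree X)} {r : ℝ} (t : PTree X)
    (e : EditStep c f g r) : EditStep c (t :: f) (t :: g) r := by
  cases e with
  | del h => exact .del (h.skip t)
  | ins h => exact .ins (h.skip t)
  | rep h => exact .rep (h.skip t)

theorem Script.child {f g : List (PTree X)} {r : ℝ} (z : X) (rest : List (PTree X))
    (h : Script c f g r) : Script c (.node z f :: rest) (.node z g :: rest) r := by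
  induction h with
  | nil => exact .nil _
  | cons e _ ih => exact .cons (e.child z rest) ih

theorem Script.skip {f g : List (PTree X)} {r : ℝ} (t : PTree X)
    (h : Script c f g r) : Script c (t :: f) (t :: g) r := by
  induction h with
  | nil => exact .nil _
  | cons e _ ih => exact .cons (e.skip t) ih

theorem Script.nonneg (hc : ∀ a b, 0 ≤ c a b) {f g : List (PTree X)} {r : ℝ}
    (h : Script c f g r) : 0 ≤ r := by
  induction h with
  | nil => exact le_rfl
  | cons e _ ih => exact add_nonneg (by cases e <;> apply hc) ih

theorem Replaces.symm {f g : List (PTree X)} {l l' : X} (h : Replaces f g l l') :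
    Replaces g f l' l := by
  induction h with
  | here l l' cs rest => exact .here l' l cs rest
  | child z rest _ ih => exact .child z rest ih
  | skip t _ ih => exact .skip t ih

theorem EditStep.reverse {f g : List (PTree X)} {r : ℝ} (e : EditStep c f g r) :
    EditStep (fun a b => c b a) g f r := by
  cases e with
  | del h => exact .ins h
  | ins h => exact .del h
  | rep h => exact .rep h.symm

theorem Script.reverse {f g : List (PTree X)} {r : ℝ} (h : Script c f g r) :
    Script (fun a b => c b a) g f r := by
  induction h with
  | nil => exact .nil _
  | cons e _ ih => simpa [add_comm] using ih.trans (Script.single e.reverse)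

theorem script_of_subtreeSizesF_eq : ∀ {f g : List (PTree X)},
    subtreeSizesF f = subtreeSizesF g →
      Script c f g (List.zipWith (fun a b => c (some a) (some b)) (preorderF f) (preorderF g)).sum
  | [], [], _ => .nil []
  | [], u :: us, h | u :: us, [], h => by
    have := congrArg List.length h
    simp only [length_subtreeSizesF, sizeF_cons, sizeF_nil] at this
    have := size_pos u
    omega
  | .node a cs :: ts, .node b ds :: us, h => by
    simp only [subtreeSizesF_cons, subtreeSizes_node, size_node, List.cons_append,
      List.cons.injEq, Nat.add_right_cancel_iff] at h
    obtain ⟨hsize, h⟩ := h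
    have hsplit := List.append_inj h (by rw [length_subtreeSizesF, length_subtreeSizesF, hsize])
    have hlen : (preorderF cs).length = (preorderF ds).length := hsize
    have hstep := Script.single (c := c) (.rep (.here a b cs ts))
    have := (hstep.trans ((script_of_subtreeSizesF_eq hsplit.1).child b ts)).trans
      ((script_of_subtreeSizesF_eq hsplit.2).skip (.node b ds))
    simpa [List.zipWith_append hlen, add_assoc] using this

end Scripts

/-- The `ℕ`-analogue of `Fin.succAbove`: position `m` of a list with entry `k` erased is
position `succAbove k m` of the original list. -/
def succAbove (k m : ℕ) : ℕ := if m < k then m else m + 1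

def succAboveInv (k i : ℕ) : ℕ := if i < k then i else i - 1

lemma succAbove_ne (k m : ℕ) : succAbove k m ≠ k := by
  unfold succAbove; split_ifs <;> omega

lemma succAbove_injective (k : ℕ) : Function.Injective (succAbove k) := by
  intro a b h; unfold succAbove at h; split_ifs at h <;> omega

lemma succAbove_lt_succAbove_iff {k a b : ℕ} : succAbove k a < succAbove k b ↔ a < b := by
  unfold succAbove; split_ifs <;> omega

lemma succAbove_lt_iff {k m n : ℕ} (hk : k < n) : succAbove k m < n ↔ m < n - 1 := by
  unfold succAbove; split_ifs <;> omega

lemma succAbove_succAboveInv {k i : ℕ} (h : i ≠ k) : succAbove k (succAboveInv k i) = i := by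
  unfold succAbove succAboveInv; split_ifs <;> omega

lemma range_eq_insert_image_succAbove {k n : ℕ} (hk : k < n) :
    range n = insert k ((range (n - 1)).image (succAbove k)) := by
  ext i
  simp only [mem_range, mem_insert, mem_image]
  constructor
  · intro hi
    by_cases hik : i = k
    · exact .inl hik
    · exact .inr ⟨succAboveInv k i, by unfold succAboveInv; split_ifs <;> omega,
        succAbove_succAboveInv hik⟩
  · rintro (rfl | ⟨m, hm, rfl⟩)
    · exact hk
    · exact (succAbove_lt_iff hk).2 hm

lemma image_succAbove_image_succAboveInv {k : ℕ} {M : Finset (ℕ × ℕ)}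
    (hk : k ∉ M.image Prod.fst) :
    (M.image (Prod.map (succAboveInv k) id)).image (Prod.map (succAbove k) id) = M := by
  rw [image_image]
  refine (image_congr fun p hp => ?_).trans image_id
  have : p.1 ≠ k := fun h => hk (mem_image.2 ⟨p, hp, h⟩)
  exact Prod.ext (succAbove_succAboveInv this) rfl

lemma getElem?_eraseIdx_eq_succAbove {α : Type} (A : List α) (k m : ℕ) :
    (A.eraseIdx k)[m]? = A[succAbove k m]? := by
  rw [List.getElem?_eraseIdx, succAbove]
  split_ifs <;> rfl

lemma image_fst_image_swap (M : Finset (ℕ × ℕ)) :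
    (M.image Prod.swap).image Prod.fst = M.image Prod.snd := by
  rw [image_image]; rfl

lemma image_snd_image_swap (M : Finset (ℕ × ℕ)) :
    (M.image Prod.swap).image Prod.snd = M.image Prod.fst := by
  rw [image_image]; rfl

noncomputable def matchingCost (c : Option X → Option X → ℝ) (A B : List X)
    (M : Finset (ℕ × ℕ)) : ℝ :=
  ∑ p ∈ M, c A[p.1]? B[p.2]? + ∑ i ∈ range A.length \ M.image Prod.fst, c A[i]? none
    + ∑ j ∈ range B.length \ M.image Prod.snd, c none B[j]?

lemma matchingCost_swap (c : Option X → Option X → ℝ) (A B : List X) (M : Finset (ℕ × ℕ)) :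
    matchingCost c A B M = matchingCost (fun a b => c b a) B A (M.image Prod.swap) := by
  simp only [matchingCost, sum_image Prod.swap_injective.injOn, image_fst_image_swap,
    image_snd_image_swap, Prod.fst_swap, Prod.snd_swap]
  ring

lemma matchingCost_insert (c : Option X → Option X → ℝ) {A B : List X} {M : Finset (ℕ × ℕ)}
    {i j : ℕ} (hi : i < A.length) (hj : j < B.length) (hiM : i ∉ M.image Prod.fst)
    (hjM : j ∉ M.image Prod.snd) :
    matchingCost c A B (insert (i, j) M) + c A[i]? none + c none B[j]? =
      matchingCost c A B M + c A[i]? B[j]? := by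
  have hij : (i, j) ∉ M := fun h => hiM (mem_image_of_mem Prod.fst h)
  have hi' : i ∈ range A.length \ M.image Prod.fst := mem_sdiff.2 ⟨mem_range.2 hi, hiM⟩
  have hj' : j ∈ range B.length \ M.image Prod.snd := mem_sdiff.2 ⟨mem_range.2 hj, hjM⟩
  simp only [matchingCost, sum_insert hij, image_insert, sdiff_insert]
  rw [← sum_erase_add _ _ hi', ← sum_erase_add _ _ hj']
  ring

lemma matchingCost_set_of_notMem (c : Option X → Option X → ℝ) {A B : List X}
    {M : Finset (ℕ × ℕ)} {k : ℕ} (hk : k < A.length) (hkM : k ∉ M.image Prod.fst) (a : X) :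
    matchingCost c (A.set k a) B M + c A[k]? none = matchingCost c A B M + c (some a) none := by
  have hk' : k ∈ range A.length \ M.image Prod.fst := mem_sdiff.2 ⟨mem_range.2 hk, hkM⟩
  have hmatched : ∀ p ∈ M, c (A.set k a)[p.1]? B[p.2]? = c A[p.1]? B[p.2]? := fun p hp => by
    rw [List.getElem?_set_ne fun h => hkM (mem_image.2 ⟨p, hp, h.symm⟩)]
  have hdeleted : ∀ i ∈ (range A.length \ M.image Prod.fst).erase k,
      c (A.set k a)[i]? none = c A[i]? none := fun i hi => by
    rw [List.getElem?_set_ne (ne_of_mem_erase hi).symm]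
  simp only [matchingCost, List.length_set]
  rw [sum_congr rfl hmatched, ← sum_erase_add _ _ hk', ← sum_erase_add _ _ hk',
    sum_congr rfl hdeleted, List.getElem?_set_self hk]
  ring

lemma matchingCost_image_succAbove (c : Option X → Option X → ℝ) {A : List X} {k : ℕ}
    (hk : k < A.length) (B : List X) (N : Finset (ℕ × ℕ)) :
    matchingCost c A B (N.image (Prod.map (succAbove k) id)) =
      c A[k]? none + matchingCost c (A.eraseIdx k) B N := by
  have hinj : Function.Injective (Prod.map (succAbove k) (id : ℕ → ℕ)) :=
    (succAbove_injective k).prodMap Function.injective_id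
  have hfst : (N.image (Prod.map (succAbove k) id)).image Prod.fst =
      (N.image Prod.fst).image (succAbove k) := by
    simp only [image_image]; rfl
  have hsnd : (N.image (Prod.map (succAbove k) id)).image Prod.snd = N.image Prod.snd := by
    simp only [image_image]; rfl
  have hdeleted : range A.length \ (N.image Prod.fst).image (succAbove k) =
      insert k ((range (A.length - 1) \ N.image Prod.fst).image (succAbove k)) := by
    rw [range_eq_insert_image_succAbove hk, insert_sdiff_of_notMem _ (by simp [succAbove_ne]),
      image_sdiff _ _ (succAbove_injective k)]
  have hk' : k ∉ (range (A.length - 1) \ N.image Prod.fst).image (succAbove k) := by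
    simp [succAbove_ne]
  simp only [matchingCost, sum_image hinj.injOn, hfst, hsnd, hdeleted, sum_insert hk',
    sum_image (succAbove_injective k).injOn, List.length_eraseIdx_of_lt hk,
    getElem?_eraseIdx_eq_succAbove, Prod.map_fst, Prod.map_snd, id]
  ring

def idMatching (n : ℕ) : Finset (ℕ × ℕ) := (range n).image fun i => (i, i)

lemma sum_zipWith_eq_sum_range (c : Option X → Option X → ℝ) :
    ∀ {A B : List X}, A.length = B.length →
      (List.zipWith (fun a b => c (some a) (some b)) A B).sum =
        ∑ i ∈ range A.length, c A[i]? B[i]?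
  | [], [], _ => rfl
  | a :: A, b :: B, h => by
    rw [List.zipWith_cons_cons, List.sum_cons, sum_zipWith_eq_sum_range c (by simpa using h),
      List.length_cons, sum_range_succ']
    simp [add_comm]

lemma matchingCost_idMatching (c : Option X → Option X → ℝ) {A B : List X}
    (h : A.length = B.length) :
    matchingCost c A B (idMatching A.length) = ∑ i ∈ range A.length, c A[i]? B[i]? := by
  have hfst : (idMatching A.length).image Prod.fst = range A.length := by
    simp [idMatching, image_image, Function.comp_def]
  have hsnd : (idMatching A.length).image Prod.snd = range B.length := by
    simp [idMatching, image_image, Function.comp_def, h]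
  rw [matchingCost, hfst, hsnd, h, sdiff_self]
  simp [idMatching, sum_image]

section PartialBijection

variable {N : Finset (ℕ × ℕ)} (hN : ∀ p ∈ N, ∀ q ∈ N, p.1 = q.1 ↔ p.2 = q.2)
include hN

lemma notMem_image_fst_erase {k j : ℕ} (hkj : (k, j) ∈ N) :
    k ∉ (N.erase (k, j)).image Prod.fst := by
  simp only [mem_image, mem_erase, not_exists, not_and]
  rintro p ⟨hne, hp⟩ hpk
  exact hne (Prod.ext hpk ((hN p hp _ hkj).1 hpk))

lemma notMem_image_snd_erase {k j : ℕ} (hkj : (k, j) ∈ N) :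
    j ∉ (N.erase (k, j)).image Prod.snd := by
  simp only [mem_image, mem_erase, not_exists, not_and]
  rintro p ⟨hne, hp⟩ hpj
  exact hne (Prod.ext ((hN p hp _ hkj).2 hpj) hpj)

lemma filter_fst_ne_eq_erase {k j : ℕ} (hkj : (k, j) ∈ N) :
    N.filter (·.1 ≠ k) = N.erase (k, j) := by
  ext p
  simp only [mem_filter, mem_erase]
  refine ⟨fun ⟨hp, hpk⟩ => ⟨fun h => hpk (by rw [h]), hp⟩, fun ⟨hne, hp⟩ => ⟨hp, fun hpk => ?_⟩⟩
  exact hne (Prod.ext hpk ((hN p hp _ hkj).1 hpk))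

end PartialBijection

section Costs

variable {c : Option X → Option X → ℝ}

lemma matchingCost_le_add_matchingCost_set (htri : ∀ a b d, c a d ≤ c a b + c b d)
    {A B : List X} {N : Finset (ℕ × ℕ)} (hN : ∀ p ∈ N, ∀ q ∈ N, p.1 = q.1 ↔ p.2 = q.2)
    (hB : ∀ p ∈ N, p.2 < B.length) {k : ℕ} (hk : k < A.length) (a : X) :
    matchingCost c A B N ≤ c A[k]? (some a) + matchingCost c (A.set k a) B N := by
  by_cases hkN : k ∈ N.image Prod.fst
  · obtain ⟨j, hkj⟩ : ∃ j, (k, j) ∈ N := by simpa using hkN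
    have hk₀ := notMem_image_fst_erase hN hkj
    have hj₀ := notMem_image_snd_erase hN hkj
    have hj := hB _ hkj
    have e₁ := matchingCost_insert c hk hj hk₀ hj₀
    have e₂ := matchingCost_insert c (A := A.set k a) (by simpa) hj hk₀ hj₀
    have e₃ := matchingCost_set_of_notMem c (B := B) hk hk₀ a
    rw [insert_erase hkj] at e₁ e₂
    rw [List.getElem?_set_self hk] at e₂
    linarith [htri A[k]? (some a) B[j]?]
  · linarith [matchingCost_set_of_notMem c (B := B) hk hkN a, htri A[k]? (some a) none]

lemma matchingCost_eraseIdx_le (hc : ∀ a b, 0 ≤ c a b) (htri : ∀ a b d, c a d ≤ c a b + c b d)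
    {A B : List X} {N : Finset (ℕ × ℕ)} (hN : ∀ p ∈ N, ∀ q ∈ N, p.1 = q.1 ↔ p.2 = q.2)
    (hB : ∀ p ∈ N, p.2 < B.length) {k : ℕ} (hk : k < A.length) :
    matchingCost c (A.eraseIdx k) B ((N.filter (·.1 ≠ k)).image (Prod.map (succAboveInv k) id))
      ≤ c none A[k]? + matchingCost c A B N := by
  have hk₀ : k ∉ (N.filter (·.1 ≠ k)).image Prod.fst := by simp
  have e₀ := matchingCost_image_succAbove c hk B
    ((N.filter (·.1 ≠ k)).image (Prod.map (succAboveInv k) id))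
  rw [image_succAbove_image_succAboveInv hk₀] at e₀
  by_cases hkN : k ∈ N.image Prod.fst
  · obtain ⟨j, hkj⟩ : ∃ j, (k, j) ∈ N := by simpa using hkN
    rw [filter_fst_ne_eq_erase hN hkj] at hk₀ e₀ ⊢
    have e₁ := matchingCost_insert c hk (hB _ hkj) hk₀ (notMem_image_snd_erase hN hkj)
    rw [insert_erase hkj] at e₁
    linarith [htri none A[k]? B[j]?]
  · have hN₀ : N.filter (·.1 ≠ k) = N :=
      filter_true_of_mem fun p hp h => hkN (mem_image.2 ⟨p, hp, h⟩)
    rw [hN₀] at e₀ ⊢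
    linarith [hc A[k]? none, hc none A[k]?]

end Costs

def IsForestMapping (f g : List (PTree X)) (M : Finset (ℕ × ℕ)) : Prop :=
  (∀ p ∈ M, p.1 < sizeF f ∧ p.2 < sizeF g) ∧
    ∀ p ∈ M, ∀ q ∈ M, (p.1 = q.1 ↔ p.2 = q.2) ∧ (p.1 < q.1 ↔ p.2 < q.2) ∧
      (IsAncestorF f p.1 q.1 ↔ IsAncestorF g p.2 q.2)

namespace IsForestMapping

variable {f g : List (PTree X)} {M : Finset (ℕ × ℕ)}

lemma fst_eq_iff (hM : IsForestMapping f g M) : ∀ p ∈ M, ∀ q ∈ M, p.1 = q.1 ↔ p.2 = q.2 :=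
  fun p hp q hq => (hM.2 p hp q hq).1

lemma snd_lt (hM : IsForestMapping f g M) : ∀ p ∈ M, p.2 < (preorderF g).length :=
  fun p hp => (hM.1 p hp).2

lemma mono (hM : IsForestMapping f g M) {N : Finset (ℕ × ℕ)} (hNM : N ⊆ M) :
    IsForestMapping f g N :=
  ⟨fun p hp => hM.1 p (hNM hp), fun p hp q hq => hM.2 p (hNM hp) q (hNM hq)⟩

lemma swap (hM : IsForestMapping f g M) : IsForestMapping g f (M.image Prod.swap) := by
  simp only [IsForestMapping, forall_mem_image, Prod.fst_swap, Prod.snd_swap]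
  exact ⟨fun p hp => (hM.1 p hp).symm, fun p hp q hq =>
    let ⟨h₁, h₂, h₃⟩ := hM.2 p hp q hq; ⟨h₁.symm, h₂.symm, h₃.symm⟩⟩

lemma of_subtreeSizesF_eq {f' : List (PTree X)} (h : subtreeSizesF f' = subtreeSizesF f)
    (hM : IsForestMapping f g M) : IsForestMapping f' g M := by
  have hsize : sizeF f' = sizeF f := by
    rw [← length_subtreeSizesF, ← length_subtreeSizesF, h]
  unfold IsForestMapping IsAncestorF
  rwa [h, hsize]

end IsForestMapping

lemma isForestMapping_idMatching (f : List (PTree X)) :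
    IsForestMapping f f (idMatching (sizeF f)) := by
  simp only [IsForestMapping, idMatching, forall_mem_image, mem_range]
  exact ⟨fun i hi => ⟨hi, hi⟩, fun _ _ _ _ => ⟨trivial, trivial, trivial⟩⟩

lemma IsDeletionAt.isAncestorF_iff {f g : List (PTree X)} {l : X} {k : ℕ}
    (h : IsDeletionAt f g l k) {m : ℕ} (hm : m < sizeF g) (m' : ℕ) :
    IsAncestorF g m m' ↔ IsAncestorF f (succAbove k m) (succAbove k m') := by
  have hsize := h.sizeF_eq
  have hpos := getD_subtreeSizesF_pos f m (by omega)
  unfold IsAncestorF succAbove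
  rw [h.subtreeSizesF_eq]
  by_cases hmk : m < k
  · rw [getD_sizesErase_of_lt _ hmk]
    split_ifs <;> omega
  · rw [getD_sizesErase_of_le _ (by omega)]
    split_ifs <;> omega

lemma IsDeletionAt.isForestMapping_image_iff {f g y : List (PTree X)} {l : X} {k : ℕ}
    (h : IsDeletionAt f g l k) {N : Finset (ℕ × ℕ)} :
    IsForestMapping f y (N.image (Prod.map (succAbove k) id)) ↔ IsForestMapping g y N := by
  have hsize := h.sizeF_eq
  have hbound : ∀ m, succAbove k m < sizeF f ↔ m < sizeF g := fun m => by
    rw [succAbove_lt_iff h.lt_sizeF, hsize]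
  simp only [IsForestMapping, forall_mem_image, Prod.map_fst, Prod.map_snd, id, hbound,
    (succAbove_injective k).eq_iff, succAbove_lt_succAbove_iff]
  refine and_congr_right fun hN => forall₂_congr fun p hp => forall₂_congr fun q _ => ?_
  rw [h.isAncestorF_iff (hN hp).1]

lemma card_filter_lt_of_image_eq_range {M : Finset (ℕ × ℕ)} {π : ℕ × ℕ → ℕ}
    (hπ : Set.InjOn π M) {n : ℕ} (hM : M.image π = range n) {a : ℕ} (ha : a ≤ n) :
    #(M.filter (π · < a)) = a := by
  have himage : (M.filter (π · < a)).image π = (M.image π).filter (· < a) :=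
    (filter_image (p := fun x => x < a)).symm
  rw [← card_image_of_injOn (hπ.mono (filter_subset _ _)), himage, hM,
    show (range n).filter (· < a) = range a by ext; simp; omega, card_range]

/-- Both coordinates of a pair count the pairs below it. -/
lemma fst_eq_snd_of_image_eq_range {M : Finset (ℕ × ℕ)}
    (hM : ∀ p ∈ M, ∀ q ∈ M, (p.1 = q.1 ↔ p.2 = q.2) ∧ (p.1 < q.1 ↔ p.2 < q.2))
    {m n : ℕ} (hfst : M.image Prod.fst = range m) (hsnd : M.image Prod.snd = range n) :
    ∀ p ∈ M, p.1 = p.2 := by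
  intro p hp
  have hinj₁ : Set.InjOn Prod.fst (M : Set (ℕ × ℕ)) := fun q hq r hr h =>
    Prod.ext h (((hM q hq r hr).1).1 h)
  have hinj₂ : Set.InjOn Prod.snd (M : Set (ℕ × ℕ)) := fun q hq r hr h =>
    Prod.ext (((hM q hq r hr).1).2 h) h
  have hp₁ : p.1 < m := mem_range.1 (hfst ▸ mem_image_of_mem _ hp)
  have hp₂ : p.2 < n := mem_range.1 (hsnd ▸ mem_image_of_mem _ hp)
  rw [← card_filter_lt_of_image_eq_range hinj₁ hfst hp₁.le,
    ← card_filter_lt_of_image_eq_range hinj₂ hsnd hp₂.le]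
  exact congrArg card (filter_congr fun q hq => (hM q hq p hp).2)

lemma image_eq_range {M : Finset (ℕ × ℕ)} {π : ℕ × ℕ → ℕ} {n : ℕ} (hlt : ∀ p ∈ M, π p < n)
    (hmem : ∀ k < n, k ∈ M.image π) : M.image π = range n :=
  Subset.antisymm (fun k hk => by obtain ⟨p, hp, rfl⟩ := mem_image.1 hk; simp [hlt p hp])
    fun k hk => hmem k (mem_range.1 hk)

lemma IsForestMapping.eq_idMatching {f g : List (PTree X)} {M : Finset (ℕ × ℕ)}
    (hM : IsForestMapping f g M) (hf : ∀ k < sizeF f, k ∈ M.image Prod.fst)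
    (hg : ∀ k < sizeF g, k ∈ M.image Prod.snd) :
    sizeF f = sizeF g ∧ M = idMatching (sizeF f) := by
  have hfst := image_eq_range (fun p hp => (hM.1 p hp).1) hf
  have hsnd := image_eq_range (fun p hp => (hM.1 p hp).2) hg
  have hdiag := fst_eq_snd_of_image_eq_range (fun p hp q hq => ⟨(hM.2 p hp q hq).1,
    (hM.2 p hp q hq).2.1⟩) hfst hsnd
  have hrange : range (sizeF f) = range (sizeF g) := by
    rw [← hfst, ← hsnd]
    exact image_congr hdiag
  have hsize : sizeF f = sizeF g := by simpa using congrArg card hrange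
  refine ⟨hsize, ?_⟩
  rw [idMatching, ← hfst, image_image]
  refine ((image_congr fun p hp => ?_).trans image_id).symm
  exact Prod.ext rfl (hdiag p hp)

lemma getD_subtreeSizesF_le_of_isAncestorF_imp {f g : List (PTree X)} (hn : sizeF f = sizeF g)
    (h : ∀ i j, i < sizeF f → j < sizeF f → IsAncestorF g i j → IsAncestorF f i j) :
    ∀ i < sizeF f, (subtreeSizesF g).getD i 0 ≤ (subtreeSizesF f).getD i 0 := by
  intro i hi
  by_contra! hlt
  have hpos := getD_subtreeSizesF_pos f i hi
  have hfit := add_getD_subtreeSizesF_le g i (hn ▸ hi)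
  -- the first node after the subtree of `i` in `f` would still lie below `i` in `g`
  have := (h i (i + (subtreeSizesF f).getD i 0) hi (by omega) ⟨by omega, by omega⟩).2
  omega

lemma subtreeSizesF_eq_of_isAncestorF_iff {f g : List (PTree X)} (hn : sizeF f = sizeF g)
    (h : ∀ i j, i < sizeF f → j < sizeF f → (IsAncestorF f i j ↔ IsAncestorF g i j)) :
    subtreeSizesF f = subtreeSizesF g := by
  refine List.ext_getElem (by rw [length_subtreeSizesF, length_subtreeSizesF, hn])
    fun i h₁ h₂ => ?_
  have hi : i < sizeF f := by rwa [length_subtreeSizesF] at h₁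
  have le₁ := getD_subtreeSizesF_le_of_isAncestorF_imp hn (fun i j hi hj => (h i j hi hj).2) i hi
  have le₂ := getD_subtreeSizesF_le_of_isAncestorF_imp hn.symm
    (fun i j hi hj => (h i j (by omega) (by omega)).1) i (by omega)
  rw [List.getD_eq_getElem _ 0 h₁, List.getD_eq_getElem _ 0 h₂] at le₁ le₂
  omega

lemma IsForestMapping.subtreeSizesF_eq {f g : List (PTree X)}
    (hM : IsForestMapping f g (idMatching (sizeF f))) (hn : sizeF f = sizeF g) :
    subtreeSizesF f = subtreeSizesF g := by
  refine subtreeSizesF_eq_of_isAncestorF_iff hn fun i j hi hj => ?_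
  have hmem : ∀ i < sizeF f, (i, i) ∈ idMatching (sizeF f) := fun i hi =>
    mem_image_of_mem _ (mem_range.2 hi)
  exact (hM.2 _ (hmem i hi) _ (hmem j hj)).2.2

section Realisation

variable {c : Option X → Option X → ℝ}

lemma IsForestMapping.exists_deletes {f g : List (PTree X)} {M : Finset (ℕ × ℕ)}
    (hM : IsForestMapping f g M) {k : ℕ} (hk : k < sizeF f) (hkM : k ∉ M.image Prod.fst) :
    ∃ f' l N, Deletes f f' l ∧ sizeF f' < sizeF f ∧ IsForestMapping f' g N ∧
      matchingCost c (preorderF f) (preorderF g) M =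
        c (some l) none + matchingCost c (preorderF f') (preorderF g) N := by
  obtain ⟨f', l, hd, hdel⟩ := exists_deletes_isDeletionAt f k hk
  have hM' := image_succAbove_image_succAboveInv hkM
  refine ⟨f', l, M.image (Prod.map (succAboveInv k) id), hd, by rw [hdel.sizeF_eq]; omega,
    ?_, ?_⟩
  · rwa [← hdel.isForestMapping_image_iff, hM']
  · conv_lhs => rw [← hM']
    rw [matchingCost_image_succAbove c hk, hdel.getElem?_eq, hdel.preorderF_eq]

theorem script_of_isForestMapping {f g : List (PTree X)} {M : Finset (ℕ × ℕ)}
    (hM : IsForestMapping f g M) :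
    Script c f g (matchingCost c (preorderF f) (preorderF g) M) := by
  induction hn : sizeF f + sizeF g using Nat.strong_induction_on generalizing c f g M with
  | _ n ih =>
  by_cases hdel : ∃ k < sizeF f, k ∉ M.image Prod.fst
  · obtain ⟨k, hk, hkM⟩ := hdel
    obtain ⟨f', l, N, hd, hlt, hN, hcost⟩ := hM.exists_deletes (c := c) hk hkM
    rw [hcost]
    exact .cons (.del hd) (ih _ (by omega) hN rfl)
  by_cases hins : ∃ k < sizeF g, k ∉ M.image Prod.snd
  · obtain ⟨k, hk, hkM⟩ := hins
    obtain ⟨g', l, N, hd, hlt, hN, hcost⟩ :=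
      hM.swap.exists_deletes (c := fun a b => c b a) hk (by rwa [image_fst_image_swap])
    rw [matchingCost_swap, hcost]
    exact (Script.cons (.del hd) (ih _ (by omega) hN rfl)).reverse
  push Not at hdel hins
  obtain ⟨hsize, rfl⟩ := hM.eq_idMatching hdel hins
  rw [show sizeF f = (preorderF f).length from rfl, matchingCost_idMatching c hsize,
    ← sum_zipWith_eq_sum_range c hsize]
  exact script_of_subtreeSizesF_eq (hM.subtreeSizesF_eq hsize)

theorem EditStep.exists_isForestMapping_le (hc : ∀ a b, 0 ≤ c a b)
    (htri : ∀ a b d, c a d ≤ c a b + c b d) {f g h : List (PTree X)} {r : ℝ}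
    (e : EditStep c f g r) {N : Finset (ℕ × ℕ)} (hN : IsForestMapping g h N) :
    ∃ M, IsForestMapping f h M ∧
      matchingCost c (preorderF f) (preorderF h) M ≤
        r + matchingCost c (preorderF g) (preorderF h) N := by
  cases e with
  | del hd =>
    obtain ⟨k, hk⟩ := hd.exists_isDeletionAt
    refine ⟨_, hk.isForestMapping_image_iff.2 hN, le_of_eq ?_⟩
    rw [matchingCost_image_succAbove c hk.lt_sizeF, hk.getElem?_eq, ← hk.preorderF_eq]
  | ins hd =>
    obtain ⟨k, hk⟩ := hd.exists_isDeletionAt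
    refine ⟨(N.filter (·.1 ≠ k)).image (Prod.map (succAboveInv k) id), ?_, ?_⟩
    · rw [← hk.isForestMapping_image_iff, image_succAbove_image_succAboveInv (by simp)]
      exact hN.mono (filter_subset _ _)
    · simpa only [← hk.preorderF_eq, hk.getElem?_eq] using
        matchingCost_eraseIdx_le hc htri hN.fst_eq_iff hN.snd_lt hk.lt_sizeF
  | @rep _ l' hr =>
    obtain ⟨k, hk⟩ := hr.exists_isReplacementAt
    refine ⟨N, hN.of_subtreeSizesF_eq hk.subtreeSizesF_eq.symm, ?_⟩
    simpa only [← hk.preorderF_eq, hk.getElem?_eq] using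
      matchingCost_le_add_matchingCost_set htri hN.fst_eq_iff hN.snd_lt hk.lt_sizeF l'

theorem Script.exists_isForestMapping_le (hc : IsPseudoMetric c) {f g : List (PTree X)} {r : ℝ}
    (h : Script c f g r) :
    ∃ M, IsForestMapping f g M ∧ matchingCost c (preorderF f) (preorderF g) M ≤ r := by
  induction h with
  | nil f =>
    refine ⟨idMatching (sizeF f), isForestMapping_idMatching f, ?_⟩
    rw [show sizeF f = (preorderF f).length from rfl, matchingCost_idMatching c rfl]
    simp [hc.2.2.1]
  | cons e _ ih =>
    obtain ⟨N, hN, hNr⟩ := ih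
    obtain ⟨M, hM, hMN⟩ := e.exists_isForestMapping_le hc.1 hc.2.2.2 hN
    exact ⟨M, hM, by linarith⟩

def valPairs {m n : ℕ} (M : Finset (Fin m × Fin n)) : Finset (ℕ × ℕ) :=
  M.map (Fin.valEmbedding.prodMap Fin.valEmbedding)

lemma isTreeMapping_iff_isForestMapping {x y : PTree X}
    {M : Finset (Fin (size x) × Fin (size y))} :
    IsTreeMapping x y M ↔ IsForestMapping [x] [y] (valPairs M) := by
  simp only [IsTreeMapping, IsForestMapping, valPairs, forall_mem_map,
    Function.Embedding.coe_prodMap, Prod.map_fst, Prod.map_snd, Fin.valEmbedding_apply,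
    sizeF_singleton, Fin.is_lt, and_self, implies_true, true_and, Fin.val_inj, Fin.val_fin_lt,
    isAncestorF_singleton]

lemma exists_valPairs_eq {m n : ℕ} {N : Finset (ℕ × ℕ)} (hN : ∀ p ∈ N, p.1 < m ∧ p.2 < n) :
    ∃ M : Finset (Fin m × Fin n), valPairs M = N := by
  refine ⟨univ.filter fun q => ((q.1 : ℕ), (q.2 : ℕ)) ∈ N, ?_⟩
  ext p
  simp only [valPairs, mem_map, mem_filter, mem_univ, true_and]
  constructor
  · rintro ⟨q, hq, rfl⟩
    exact hq
  · intro hp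
    exact ⟨(⟨p.1, (hN p hp).1⟩, ⟨p.2, (hN p hp).2⟩), hp, rfl⟩

lemma range_sdiff_map_valEmbedding {n : ℕ} (S : Finset (Fin n)) :
    range n \ S.map Fin.valEmbedding = Sᶜ.map Fin.valEmbedding := by
  ext i
  simp only [mem_sdiff, mem_range, mem_map, Fin.valEmbedding_apply, mem_compl]
  constructor
  · rintro ⟨hi, hiS⟩
    exact ⟨⟨i, hi⟩, fun h => hiS ⟨_, h, rfl⟩, rfl⟩
  · rintro ⟨j, hj, rfl⟩
    exact ⟨j.isLt, fun ⟨j', hj', h⟩ => hj (Fin.val_injective h ▸ hj')⟩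

lemma mappingCost_eq_matchingCost (c : Option X → Option X → ℝ) (x y : PTree X)
    (M : Finset (Fin (size x) × Fin (size y))) :
    mappingCost c x y M = matchingCost c (preorder x) (preorder y) (valPairs M) := by
  have hfst : (valPairs M).image Prod.fst = (M.image Prod.fst).map Fin.valEmbedding := by
    simp [valPairs, map_eq_image, image_image, Function.comp_def]
  have hsnd : (valPairs M).image Prod.snd = (M.image Prod.snd).map Fin.valEmbedding := by
    simp [valPairs, map_eq_image, image_image, Function.comp_def]
  have hunmatched₁ : univ.filter (fun i : Fin (size x) => ∀ p ∈ M, p.1 ≠ i) =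
      (M.image Prod.fst)ᶜ := by
    ext i
    simpa using ⟨fun h b hb => h _ _ hb rfl, fun h a b hab hai => h b (hai ▸ hab)⟩
  have hunmatched₂ : univ.filter (fun j : Fin (size y) => ∀ p ∈ M, p.2 ≠ j) =
      (M.image Prod.snd)ᶜ := by
    ext j
    simpa using ⟨fun h a ha => h _ _ ha rfl, fun h a b hab hbj => h a (hbj ▸ hab)⟩
  rw [mappingCost, matchingCost, hfst, hsnd, hunmatched₁, hunmatched₂, valPairs, sum_map]
  simp only [Function.Embedding.coe_prodMap, Prod.map_fst, Prod.map_snd, Fin.valEmbedding_apply]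
  simp [range_sdiff_map_valEmbedding, label, size]
  rfl

lemma mappingCost_nonneg (hc : ∀ a b, 0 ≤ c a b) (x y : PTree X)
    (M : Finset (Fin (size x) × Fin (size y))) : 0 ≤ mappingCost c x y M :=
  add_nonneg (add_nonneg (sum_nonneg fun _ _ => hc _ _) (sum_nonneg fun _ _ => hc _ _))
    (sum_nonneg fun _ _ => hc _ _)

lemma mapDist_le (hc : ∀ a b, 0 ≤ c a b) {x y : PTree X}
    {M : Finset (Fin (size x) × Fin (size y))} (hM : IsTreeMapping x y M) :
    mapDist c x y ≤ mappingCost c x y M :=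
  csInf_le ⟨0, by rintro _ ⟨M, -, rfl⟩; exact mappingCost_nonneg hc x y M⟩ ⟨M, hM, rfl⟩

lemma editDist_le (hc : ∀ a b, 0 ≤ c a b) {x y : PTree X} {r : ℝ} (h : Script c [x] [y] r) :
    editDist c x y ≤ r :=
  csInf_le ⟨0, fun _ hr => hr.nonneg hc⟩ h

lemma script_of_isTreeMapping {x y : PTree X} {M : Finset (Fin (size x) × Fin (size y))}
    (hM : IsTreeMapping x y M) : Script c [x] [y] (mappingCost c x y M) := by
  simpa [mappingCost_eq_matchingCost] using
    script_of_isForestMapping (c := c) (isTreeMapping_iff_isForestMapping.1 hM)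

lemma Script.exists_isTreeMapping_le (hc : IsPseudoMetric c) {x y : PTree X} {r : ℝ}
    (h : Script c [x] [y] r) :
    ∃ M : Finset (Fin (size x) × Fin (size y)),
      IsTreeMapping x y M ∧ mappingCost c x y M ≤ r := by
  obtain ⟨N, hN, hNr⟩ := h.exists_isForestMapping_le hc
  obtain ⟨M, rfl⟩ := exists_valPairs_eq (m := size x) (n := size y) (by simpa using hN.1)
  exact ⟨M, isTreeMapping_iff_isForestMapping.2 hN,
    by simpa [mappingCost_eq_matchingCost] using hNr⟩

end Realisation

end PTree

/-- Let `X` be a finite alphabet and `c₀` a pseudo-metric on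
`X ∪ {−}`. The matrix `P_{c₀}(x̄, ȳ)` encoding a cheapest edit script under
`c₀` is represented by a tree mapping `M` between `x̄` and `ȳ` of minimal cost
under `c₀` (replaced pairs are the matched pairs, deletions the unmatched
nodes of `x̄`, insertions the unmatched nodes of `ȳ`); the pseudo edit
distance `d̃_c(x̄, ȳ)` is then the cost of `M` under `c`. The pseudo edit
distance evaluated at the default cost function equals the true tree edit
distance: `d̃_{c₀}(x̄, ȳ) = d_{c₀}(x̄, ȳ)`. -/
theorem pseudoEditDist_default_eq_editDist (X : Type) [Fintype X]
    (c₀ : Option X → Option X → ℝ) (hc₀ : IsPseudoMetric c₀) (x y : PTree X)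
    (M : Finset (Fin (PTree.size x) × Fin (PTree.size y)))
    (hM : PTree.IsTreeMapping x y M)
    (hopt : PTree.mappingCost c₀ x y M = PTree.mapDist c₀ x y) :
    PTree.mappingCost c₀ x y M = PTree.editDist c₀ x y := by
  have hscript := PTree.script_of_isTreeMapping (c := c₀) hM
  refine le_antisymm (le_csInf ⟨_, hscript⟩ fun r hr => ?_) (PTree.editDist_le hc₀.1 hscript)
  obtain ⟨M', hM', hM'r⟩ := hr.exists_isTreeMapping_le hc₀
  calc PTree.mappingCost c₀ x y M = PTree.mapDist c₀ x y := hopt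
    _ ≤ PTree.mappingCost c₀ x y M' := PTree.mapDist_le hc₀.1 hM'
    _ ≤ r := hM'r
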